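/- arXiv:2510.04079 — 4 statements merged into one kernel-verified Lean document; each statement's English description precedes it below -/
import Mathlib

section
/- Let $d \ge 1$ and let $\mu$ be a Borel probability measure on the unit sphere $S^{d-1} \subset \mathbb{R}^d$. If $u, v$ are drawn independently according to $\mu$, then the probability that $u \perp v$ (i.e. $\langle u, v \rangle = 0$) is at most $(d-1)/d$. -/
/-! With `M i j = ∫ u i * u j ∂μ` the second-moment matrix of `μ`, independence gives
`𝔼⟪u, v⟫² = ∑ i j, M i j ² ≥ (∑ i, M i i)² / d = 1 / d`, the last step by Cauchy–Schwarz
and `∑ i, M i i = 𝔼‖u‖² = 1`. Since `⟪u, v⟫² ≤ 1` and it vanishes on orthogonal pairs,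
`𝔼⟪u, v⟫²` is at most the probability that `u` and `v` are not orthogonal. -/

open MeasureTheory
open scoped RealInnerProductSpace

section SecondMoment

variable {ι : Type*} [Fintype ι]

lemma EuclideanSpace.real_inner_eq_sum (u v : EuclideanSpace ℝ ι) :
    ⟪u, v⟫ = ∑ i, u i * v i := by
  simp [PiLp.inner_apply, mul_comm]

lemma integrable_apply_mul_apply {μ : Measure (EuclideanSpace ℝ ι)} [IsFiniteMeasure μ]
    (hμ : ∀ᵐ u ∂μ, ‖u‖ ≤ 1) (i j : ι) :
    Integrable (fun u : EuclideanSpace ℝ ι => u i * u j) μ := by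
  refine .of_bound (by fun_prop) 1 ?_
  filter_upwards [hμ] with u hu
  rw [norm_mul, ← one_mul (1 : ℝ)]
  exact mul_le_mul ((PiLp.norm_apply_le u i).trans hu) ((PiLp.norm_apply_le u j).trans hu)
    (norm_nonneg _) zero_le_one

lemma integral_inner_sq_prod {μ ν : Measure (EuclideanSpace ℝ ι)}
    [IsFiniteMeasure μ] [IsFiniteMeasure ν] (hμ : ∀ᵐ u ∂μ, ‖u‖ ≤ 1) (hν : ∀ᵐ v ∂ν, ‖v‖ ≤ 1) :
    ∫ p, ⟪p.1, p.2⟫ ^ 2 ∂μ.prod ν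
      = ∑ i, ∑ j, (∫ u, u i * u j ∂μ) * ∫ v, v i * v j ∂ν := by
  have hint (i j : ι) :=
    (integrable_apply_mul_apply hμ i j).mul_prod (integrable_apply_mul_apply hν i j)
  have hexpand (p : EuclideanSpace ℝ ι × EuclideanSpace ℝ ι) :
      ⟪p.1, p.2⟫ ^ 2 = ∑ i, ∑ j, (p.1 i * p.1 j) * (p.2 i * p.2 j) := by
    simp only [EuclideanSpace.real_inner_eq_sum, sq, Finset.sum_mul_sum]
    exact Finset.sum_congr rfl fun i _ => Finset.sum_congr rfl fun j _ => by ring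
  simp_rw [hexpand]
  rw [integral_finsetSum _ fun i _ => integrable_finsetSum _ fun j _ => hint i j]
  refine Finset.sum_congr rfl fun i _ => ?_
  rw [integral_finsetSum _ fun j _ => hint i j]
  exact Finset.sum_congr rfl fun j _ =>
    integral_prod_mul (fun u : EuclideanSpace ℝ ι => u i * u j)
      (fun v : EuclideanSpace ℝ ι => v i * v j)

lemma sum_integral_apply_mul_self {μ : Measure (EuclideanSpace ℝ ι)} [IsProbabilityMeasure μ]
    (hμ : ∀ᵐ u ∂μ, ‖u‖ = 1) : ∑ i, ∫ u, u i * u i ∂μ = 1 := by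
  have hμ' : ∀ᵐ u ∂μ, ‖u‖ ≤ 1 := hμ.mono fun u hu => hu.le
  rw [← integral_finsetSum _ fun i _ => integrable_apply_mul_apply hμ' i i]
  calc ∫ u, ∑ i, u i * u i ∂μ = ∫ _, (1 : ℝ) ∂μ := integral_congr_ae <| hμ.mono fun u hu => by
        dsimp only
        rw [← EuclideanSpace.real_inner_eq_sum, real_inner_self_eq_norm_sq, hu, one_pow]
    _ = 1 := by simp

lemma inv_card_le_integral_inner_sq {μ : Measure (EuclideanSpace ℝ ι)} [IsProbabilityMeasure μ]
    (hμ : ∀ᵐ u ∂μ, ‖u‖ = 1) :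
    (Fintype.card ι : ℝ)⁻¹ ≤ ∫ p, ⟪p.1, p.2⟫ ^ 2 ∂μ.prod μ := by
  have hμ' : ∀ᵐ u ∂μ, ‖u‖ ≤ 1 := hμ.mono fun u hu => hu.le
  set M : ι → ι → ℝ := fun i j => ∫ u, u i * u j ∂μ
  have hdiag : (Fintype.card ι : ℝ)⁻¹ ≤ ∑ i, M i i ^ 2 := by
    have := sq_sum_le_card_mul_sum_sq (s := Finset.univ) (f := fun i => M i i)
    rw [sum_integral_apply_mul_self hμ, one_pow] at this
    have hcard : (0 : ℝ) < Fintype.card ι :=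
      (Nat.cast_nonneg _).lt_of_ne fun h => by simp [← h] at this; linarith
    rw [inv_le_iff_one_le_mul₀ hcard]
    simpa [mul_comm] using this
  calc (Fintype.card ι : ℝ)⁻¹ ≤ ∑ i, M i i ^ 2 := hdiag
    _ ≤ ∑ i, ∑ j, M i j ^ 2 := Finset.sum_le_sum fun i _ =>
        Finset.single_le_sum (f := fun j => M i j ^ 2) (fun j _ => sq_nonneg _) (Finset.mem_univ i)
    _ = _ := by rw [integral_inner_sq_prod hμ' hμ']; simp only [M, sq]

end SecondMoment

lemma integral_sq_le_measureReal_ne_zero {α : Type*} [MeasurableSpace α] {μ : Measure α}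
    [IsFiniteMeasure μ] {f : α → ℝ} (hf : Measurable f) (hf1 : ∀ᵐ x ∂μ, |f x| ≤ 1) :
    ∫ x, f x ^ 2 ∂μ ≤ μ.real {x | f x ≠ 0} := by
  have hs : MeasurableSet {x | f x ≠ 0} := (measurableSet_singleton 0).compl.preimage hf
  rw [← integral_indicator_one hs]
  refine integral_mono_ae ?_ ((integrable_const 1).indicator hs) ?_
  · refine .of_bound (by fun_prop) 1 ?_
    filter_upwards [hf1] with x hx
    simpa using (sq_le_one_iff_abs_le_one _).mpr hx
  · filter_upwards [hf1] with x hx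
    by_cases h : f x = 0
    · simp [h]
    · rw [Set.indicator_of_mem h, Pi.one_apply]
      exact (sq_le_one_iff_abs_le_one _).mpr hx

lemma ae_abs_real_inner_le_one {E : Type*} [NormedAddCommGroup E] [InnerProductSpace ℝ E]
    [MeasurableSpace E] {μ ν : Measure E} [SFinite ν] (hμ : ∀ᵐ u ∂μ, ‖u‖ ≤ 1)
    (hν : ∀ᵐ v ∂ν, ‖v‖ ≤ 1) : ∀ᵐ p ∂μ.prod ν, |⟪p.1, p.2⟫| ≤ 1 := by
  filter_upwards [Measure.quasiMeasurePreserving_fst.ae hμ,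
    Measure.quasiMeasurePreserving_snd.ae hν] with p h₁ h₂
  exact (abs_real_inner_le_norm _ _).trans (mul_le_one₀ h₁ (norm_nonneg _) h₂)

theorem orth_prob_le (d : ℕ) (hd : 1 ≤ d)
    (μ : Measure (EuclideanSpace ℝ (Fin d))) [IsProbabilityMeasure μ]
    (hμ : μ (Metric.sphere (0 : EuclideanSpace ℝ (Fin d)) 1) = 1) :
    (μ.prod μ) {p : EuclideanSpace ℝ (Fin d) × EuclideanSpace ℝ (Fin d) | ⟪p.1, p.2⟫ = 0}
      ≤ ENNReal.ofReal (((d : ℝ) - 1) / d) := by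
  have hsphere : ∀ᵐ u ∂μ, ‖u‖ = 1 := by
    have := (ae_mem_iff_measure_eq Metric.isClosed_sphere.measurableSet.nullMeasurableSet).mpr
      (hμ.trans measure_univ.symm)
    simpa using this
  have hball : ∀ᵐ u ∂μ, ‖u‖ ≤ 1 := hsphere.mono fun u hu => hu.le
  have hmeas : Measurable fun p : EuclideanSpace ℝ (Fin d) × EuclideanSpace ℝ (Fin d) =>
      ⟪p.1, p.2⟫ := by fun_prop
  have hnonorth : (d : ℝ)⁻¹ ≤ (μ.prod μ).real {p | ⟪p.1, p.2⟫ ≠ 0} := by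
    simpa using (inv_card_le_integral_inner_sq hsphere).trans
      (integral_sq_le_measureReal_ne_zero hmeas (ae_abs_real_inner_le_one hball hball))
  have horth : (μ.prod μ).real {p | ⟪p.1, p.2⟫ = 0} ≤ ((d : ℝ) - 1) / d := by
    have hd' : (d : ℝ) ≠ 0 := Nat.cast_ne_zero.mpr (Nat.one_le_iff_ne_zero.mp hd)
    have hcompl : {p : EuclideanSpace ℝ (Fin d) × EuclideanSpace ℝ (Fin d) | ⟪p.1, p.2⟫ = 0}
        = {p | ⟪p.1, p.2⟫ ≠ 0}ᶜ := by
      ext; simp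
    rw [hcompl, probReal_compl_eq_one_sub (μ := μ.prod μ) (s := {p | ⟪p.1, p.2⟫ ≠ 0})
      (hmeas (measurableSet_singleton 0).compl),
      sub_div, div_self hd']
    linarith [one_div (d : ℝ)]
  rw [← ofReal_measureReal]
  exact ENNReal.ofReal_le_ofReal horth
end

section
/- Let $d \ge 1$, let $2 \le \ell \le d$, and let $\mu$ be a Borel probability measure on the unit sphere $S^{d-1} \subset \mathbb{R}^d$. If $u_1, \dots, u_\ell$ are drawn i.i.d. according to $\mu$, then the probability that they are pairwise orthogonal is at most $\frac{d!}{(d-\ell)! \cdot d^\ell}$. -/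
/-!
The Gram determinant `det G(u)` of `u₁, …, u_ℓ` is nonnegative and equals `1` when the `uᵢ` are
orthonormal, so by Markov's inequality the probability is at most `𝔼 det G(u)`. Expanding the
determinant multilinearly in its rows, each summand has columns depending on a single `uⱼ`, so by
independence `𝔼 det G(u) = ∑_{f : [ℓ] → [d]} det M[f, f]`, where `M = 𝔼 v vᵀ` is positive
semidefinite with trace `1`. Non-injective `f` contribute `0` and, by Hadamard's inequality, the
others at most `∏ⱼ M_{f j, f j}`; so with `y = diag M` the expectation is at most `ℓ! e_ℓ(y)`.
Finally, for a probability vector `y`, Chebyshev's sum inequality gives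
`d (k + 1) e_{k+1}(y) ≤ (d - k) e_k(y)`, hence `d^ℓ ℓ! e_ℓ(y) ≤ d! / (d - ℓ)!`.
-/

open MeasureTheory Finset Matrix Function
open scoped RealInnerProductSpace

section ElemSymm

variable {ι : Type*} (y : ι → ℝ)

noncomputable def elemSymm (s : Finset ι) (k : ℕ) : ℝ :=
  ∑ t ∈ s.powersetCard k, ∏ i ∈ t, y i

@[simp]
lemma elemSymm_zero (s : Finset ι) : elemSymm y s 0 = 1 := by simp [elemSymm]

lemma elemSymm_one (s : Finset ι) : elemSymm y s 1 = ∑ i ∈ s, y i := by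
  simp [elemSymm, powersetCard_one]

lemma elemSymm_eq_zero_of_card_lt {s : Finset ι} {k : ℕ} (h : #s < k) : elemSymm y s k = 0 := by
  rw [elemSymm, powersetCard_eq_empty.2 h, sum_empty]

lemma elemSymm_nonneg {y : ι → ℝ} (hy : ∀ i, 0 ≤ y i) (s : Finset ι) (k : ℕ) :
    0 ≤ elemSymm y s k :=
  sum_nonneg fun _ _ => prod_nonneg fun i _ => hy i

variable [DecidableEq ι]

lemma elemSymm_insert {s : Finset ι} {j : ι} (hj : j ∉ s) (k : ℕ) :
    elemSymm y (insert j s) (k + 1) = elemSymm y s (k + 1) + y j * elemSymm y s k := by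
  have hj' : ∀ t ∈ s.powersetCard k, j ∉ t := fun t ht h => hj ((mem_powersetCard.1 ht).1 h)
  rw [elemSymm, powersetCard_succ_insert hj, sum_union, sum_image, elemSymm, elemSymm, mul_sum]
  · exact congrArg _ (sum_congr rfl fun t ht => prod_insert (hj' t ht))
  · intro t ht u hu htu
    simpa [erase_insert (hj' t ht), erase_insert (hj' u hu)] using congrArg (erase · j) htu
  · refine disjoint_right.2 fun t ht ht' => ?_
    obtain ⟨u, -, rfl⟩ := mem_image.1 ht
    exact hj ((mem_powersetCard.1 ht').1 (mem_insert_self j u))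

lemma elemSymm_of_mem {s : Finset ι} {j : ι} (hj : j ∈ s) (k : ℕ) :
    elemSymm y s (k + 1) = elemSymm y (s.erase j) (k + 1) + y j * elemSymm y (s.erase j) k := by
  conv_lhs => rw [← insert_erase hj]
  exact elemSymm_insert y (notMem_erase j s) k

lemma sum_mul_elemSymm_erase (s : Finset ι) (k : ℕ) :
    ∑ i ∈ s, y i * elemSymm y (s.erase i) k = (k + 1) * elemSymm y s (k + 1) := by
  induction s using Finset.induction_on generalizing k with
  | empty => simp [elemSymm_eq_zero_of_card_lt y (s := ∅) (k := k + 1) (by simp)]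
  | insert j s hj ih =>
    cases k with
    | zero => simp [elemSymm_one]
    | succ k =>
      have herase : ∀ i ∈ s, elemSymm y ((insert j s).erase i) (k + 1)
          = elemSymm y (s.erase i) (k + 1) + y j * elemSymm y (s.erase i) k := fun i hi => by
        rw [erase_insert_of_ne (ne_of_mem_of_not_mem hi hj).symm,
          elemSymm_insert y (fun h => hj (mem_of_mem_erase h))]
      have hswap : ∑ i ∈ s, y i * (y j * elemSymm y (s.erase i) k)
          = y j * ∑ i ∈ s, y i * elemSymm y (s.erase i) k := by
        rw [mul_sum]; exact sum_congr rfl fun _ _ => by ring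
      rw [sum_insert hj, erase_insert hj, sum_congr rfl fun i hi => by rw [herase i hi],
        elemSymm_insert y hj]
      simp only [mul_add, sum_add_distrib, ih, hswap]
      push_cast
      ring

lemma monovaryOn_mul_elemSymm_erase {y : ι → ℝ} (hy : ∀ i, 0 ≤ y i) (s : Finset ι) (k : ℕ) :
    MonovaryOn (fun i => y i * elemSymm y (s.erase i) k) y s := by
  intro i hi j hj hlt
  have hij : i ≠ j := fun h => hlt.ne (congrArg y h)
  cases k with
  | zero => simpa using hlt.le
  | succ k =>
    -- `y i * e (s \ {i}) - y j * e (s \ {j}) = (y i - y j) * e (s \ {i, j})`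
    have he := elemSymm_nonneg hy ((s.erase i).erase j) (k + 1)
    dsimp only
    rw [elemSymm_of_mem y (mem_erase.2 ⟨hij.symm, hj⟩),
      elemSymm_of_mem y (mem_erase.2 ⟨hij, hi⟩), erase_right_comm (a := j)]
    nlinarith [mul_le_mul_of_nonneg_right hlt.le he]

lemma card_mul_elemSymm_succ_le {y : ι → ℝ} (hy : ∀ i, 0 ≤ y i) {s : Finset ι}
    (hs : ∑ i ∈ s, y i = 1) (k : ℕ) :
    #s * ((k + 1) * elemSymm y s (k + 1)) ≤ (#s - k) * elemSymm y s k := by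
  cases k with
  | zero => simp [elemSymm_one, hs]
  | succ k =>
    set Q := ∑ i ∈ s, y i * elemSymm y (s.erase i) k * y i
    have hcheb : (k + 1) * elemSymm y s (k + 1) ≤ #s * Q := by
      have := (monovaryOn_mul_elemSymm_erase hy s k).sum_mul_sum_le_card_mul_sum
      rwa [hs, mul_one, sum_mul_elemSymm_erase] at this
    have hsplit :
        ∑ i ∈ s, y i * elemSymm y (s.erase i) (k + 1) = elemSymm y s (k + 1) - Q := by
      rw [eq_sub_iff_add_eq, ← sum_add_distrib]
      calc _ = ∑ i ∈ s, elemSymm y s (k + 1) * y i :=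
            sum_congr rfl fun i hi => by rw [elemSymm_of_mem y hi]; ring
        _ = _ := by rw [← mul_sum, hs, mul_one]
    rw [sum_mul_elemSymm_erase] at hsplit
    push_cast at hsplit ⊢
    rw [hsplit]
    linarith

lemma pow_mul_factorial_mul_elemSymm_le {y : ι → ℝ} (hy : ∀ i, 0 ≤ y i) {s : Finset ι}
    (hs : ∑ i ∈ s, y i = 1) (k : ℕ) :
    (#s : ℝ) ^ k * k.factorial * elemSymm y s k ≤ (#s).descFactorial k := by
  induction k with
  | zero => simp
  | succ k ih =>
    rcases lt_or_ge #s (k + 1) with hlt | hle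
    · rw [elemSymm_eq_zero_of_card_lt y hlt, mul_zero]
      positivity
    · have hk : (0 : ℝ) ≤ #s - k := by
        rw [sub_nonneg]; exact_mod_cast (Nat.le_of_succ_le hle)
      calc (#s : ℝ) ^ (k + 1) * (k + 1).factorial * elemSymm y s (k + 1)
          = #s ^ k * k.factorial * (#s * ((k + 1) * elemSymm y s (k + 1))) := by
            push_cast [Nat.factorial_succ]; ring
        _ ≤ #s ^ k * k.factorial * ((#s - k) * elemSymm y s k) :=
            mul_le_mul_of_nonneg_left (card_mul_elemSymm_succ_le hy hs k) (by positivity)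
        _ = (#s - k) * (#s ^ k * k.factorial * elemSymm y s k) := by ring
        _ ≤ (#s - k) * (#s).descFactorial k := by gcongr
        _ = (#s).descFactorial (k + 1) := by
            rw [Nat.descFactorial_succ, Nat.cast_mul, Nat.cast_sub (Nat.le_of_succ_le hle)]

end ElemSymm

section InjectiveMaps

variable {ι κ : Type*} [Fintype ι] [DecidableEq ι] [Fintype κ] [DecidableEq κ]

lemma card_injective_image_eq {t : Finset ι} (ht : #t = Fintype.card κ) :
    #{f ∈ univ.filter (fun f : κ → ι => Injective f) | univ.image f = t}
      = (Fintype.card κ).factorial := by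
  have hcard : (Fintype.card κ).factorial = Fintype.card (κ ↪ t) := by
    rw [Fintype.card_embedding_eq, Fintype.card_coe, ht, Nat.descFactorial_self]
  rw [hcard, ← card_univ]
  refine card_bij' (fun f hf => ⟨fun j => ⟨f j, ?_⟩, fun a b h => ?_⟩)
    (fun e _ j => e j) (fun _ _ => mem_univ _) (fun e _ => ?_) (fun _ _ => rfl)
    (fun _ _ => rfl)
  · obtain ⟨-, rfl⟩ := mem_filter.1 hf
    exact mem_image_of_mem f (mem_univ j)
  · exact (mem_filter.1 (mem_filter.1 hf).1).2 (congrArg Subtype.val h)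
  · have hinj : Injective fun j => (e j : ι) := Subtype.val_injective.comp e.injective
    refine mem_filter.2 ⟨mem_filter.2 ⟨mem_univ _, hinj⟩, eq_of_subset_of_card_le ?_ ?_⟩
    · exact image_subset_iff.2 fun j _ => (e j).2
    · rw [card_image_of_injective _ hinj, card_univ, ht]

lemma sum_prod_injective_eq (y : ι → ℝ) :
    ∑ f ∈ univ.filter (fun f : κ → ι => Injective f), ∏ j, y (f j)
      = (Fintype.card κ).factorial * elemSymm y univ (Fintype.card κ) := by
  have hmaps : ∀ f ∈ univ.filter (fun f : κ → ι => Injective f),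
      univ.image f ∈ univ.powersetCard (Fintype.card κ) := fun f hf =>
    mem_powersetCard.2
      ⟨subset_univ _, by rw [card_image_of_injective _ (mem_filter.1 hf).2, card_univ]⟩
  rw [← sum_fiberwise_of_maps_to hmaps, elemSymm, mul_sum]
  refine sum_congr rfl fun t ht => ?_
  have hprod : ∀ f ∈ {f ∈ univ.filter (fun f : κ → ι => Injective f) | univ.image f = t},
      ∏ j, y (f j) = ∏ i ∈ t, y i := fun f hf => by
    obtain ⟨hinj, rfl⟩ := mem_filter.1 hf
    exact (prod_image fun a _ b _ h => (mem_filter.1 hinj).2 h).symm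
  rw [sum_congr rfl hprod, sum_const, nsmul_eq_mul,
    card_injective_image_eq (mem_powersetCard.1 ht).2]

theorem sum_prod_injective_le {y : ι → ℝ} (hy : ∀ i, 0 ≤ y i) (hs : ∑ i, y i = 1) :
    ∑ f ∈ univ.filter (fun f : κ → ι => Injective f), ∏ j, y (f j)
      ≤ (Fintype.card ι).descFactorial (Fintype.card κ)
        / (Fintype.card ι : ℝ) ^ Fintype.card κ := by
  obtain ⟨i, -, -⟩ := exists_ne_zero_of_sum_ne_zero (hs ▸ one_ne_zero)
  have hι : (0 : ℝ) < Fintype.card ι := by exact_mod_cast Fintype.card_pos_iff.2 ⟨i⟩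
  have := pow_mul_factorial_mul_elemSymm_le hy hs (Fintype.card κ)
  rw [card_univ] at this
  rw [sum_prod_injective_eq, le_div_iff₀ (by positivity)]
  linarith

end InjectiveMaps

lemma prod_le_sum_div_card_pow {ι : Type*} {s : Finset ι} {z : ι → ℝ}
    (hz : ∀ i ∈ s, 0 ≤ z i) :
    ∏ i ∈ s, z i ≤ ((∑ i ∈ s, z i) / #s) ^ #s := by
  rcases s.eq_empty_or_nonempty with rfl | hs
  · simp
  have hn : (0 : ℝ) < #s := by exact_mod_cast hs.card_pos
  calc ∏ i ∈ s, z i = (∏ i ∈ s, z i ^ (#s : ℝ)⁻¹) ^ #s := by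
        rw [← prod_pow]
        refine prod_congr rfl fun i hi => ?_
        rw [← Real.rpow_natCast, ← Real.rpow_mul (hz i hi), inv_mul_cancel₀ hn.ne',
          Real.rpow_one]
    _ ≤ (∑ i ∈ s, (#s : ℝ)⁻¹ * z i) ^ #s := by
        gcongr
        · exact prod_nonneg fun i hi => Real.rpow_nonneg (hz i hi) _
        · exact Real.geom_mean_le_arith_mean_weighted s _ z (fun _ _ => by positivity)
            (by simp [hn.ne']) hz
    _ = ((∑ i ∈ s, z i) / #s) ^ #s := by rw [← mul_sum, inv_mul_eq_div]

section Hadamard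

variable {n : Type*} [Fintype n] [DecidableEq n]

lemma Matrix.PosSemidef.det_le_trace_div_card_pow {A : Matrix n n ℝ} (hA : A.PosSemidef) :
    A.det ≤ (A.trace / Fintype.card n) ^ Fintype.card n := by
  rw [hA.isHermitian.det_eq_prod_eigenvalues, hA.isHermitian.trace_eq_sum_eigenvalues]
  have := prod_le_sum_div_card_pow (s := univ) fun i _ => hA.eigenvalues_nonneg i
  rw [card_univ] at this
  simpa using this

theorem Matrix.PosSemidef.det_le_prod_diag {A : Matrix n n ℝ} (hA : A.PosSemidef) :
    A.det ≤ ∏ i, A i i := by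
  by_cases h0 : ∃ i, A i i = 0
  · obtain ⟨i, hi⟩ := h0
    have hcol : A *ᵥ Pi.single i 1 = 0 := (hA.dotProduct_mulVec_zero_iff _).1 (by simp [hi])
    rw [det_eq_zero_of_column_eq_zero i fun j => by simpa using congrFun hcol j]
    exact prod_nonneg fun j _ => hA.diag_nonneg
  -- otherwise rescale `A` to unit diagonal, where AM-GM on the eigenvalues gives `det ≤ 1`
  rw [not_exists] at h0
  have hpos : ∀ i, 0 < A i i := fun i => hA.diag_nonneg.lt_of_ne' (h0 i)
  set D : Matrix n n ℝ := diagonal fun i => (√(A i i))⁻¹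
  have hB : (D * A * D).PosSemidef := by
    simpa [D] using hA.mul_mul_conjTranspose_same D
  have hBdiag : ∀ i, (D * A * D) i i = 1 := fun i => by
    simp only [D, diagonal_mul, mul_diagonal]
    rw [mul_right_comm, ← mul_inv, Real.mul_self_sqrt (hpos i).le,
      inv_mul_cancel₀ (hpos i).ne']
  have hdet : (D * A * D).det = A.det / ∏ i, A i i := by
    simp only [D, det_mul, det_diagonal, prod_inv_distrib]
    rw [div_eq_mul_inv, ← prod_congr rfl fun i _ => Real.mul_self_sqrt (hpos i).le,
      prod_mul_distrib]
    ring
  have hle := hB.det_le_trace_div_card_pow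
  simp only [trace, diag_apply, hBdiag, hdet, sum_const, card_univ, nsmul_one] at hle
  refine (div_le_one (prod_pos fun i _ => hpos i)).1 (hle.trans ?_)
  exact pow_le_one₀ (by positivity) (div_self_le_one _)

end Hadamard

theorem sum_det_submatrix_le {ι κ : Type*} [Fintype ι] [DecidableEq ι] [Fintype κ]
    [DecidableEq κ] {A : Matrix ι ι ℝ} (hA : A.PosSemidef) (htr : A.trace = 1) :
    ∑ f : κ → ι, (A.submatrix f f).det
      ≤ (Fintype.card ι).descFactorial (Fintype.card κ)
        / (Fintype.card ι : ℝ) ^ Fintype.card κ := by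
  rw [← sum_filter_add_sum_filter_not univ fun f : κ → ι => Injective f]
  have hnoninj :
      ∑ f ∈ univ.filter (fun f : κ → ι => ¬ Injective f), (A.submatrix f f).det = 0 :=
    sum_eq_zero fun f hf => by
      obtain ⟨a, b, hab, hne⟩ := not_injective_iff.1 (mem_filter.1 hf).2
      exact det_zero_of_row_eq hne (funext fun j => by simp [hab])
  rw [hnoninj, add_zero]
  calc _ ≤ ∑ f ∈ univ.filter (fun f : κ → ι => Injective f), ∏ j, A (f j) (f j) :=
        sum_le_sum fun f _ => (hA.submatrix f).det_le_prod_diag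
    _ ≤ _ := sum_prod_injective_le (fun i => hA.diag_nonneg) htr

section DetOfColumns

variable {κ α : Type*} [Fintype κ] [DecidableEq κ] [MeasurableSpace α] {μ : κ → Measure α}
  [∀ j, SigmaFinite (μ j)] {F : κ → α → κ → ℝ}

lemma integrable_det_of_columns_pi (hF : ∀ i j, Integrable (fun v => F j v i) (μ j)) :
    Integrable (fun x : κ → α => (of fun i j => F j (x j) i).det) (Measure.pi μ) := by
  simp_rw [det_apply', of_apply]
  exact integrable_finsetSum _ fun σ _ =>
    (Integrable.fintype_prod fun j => hF (σ j) j).const_mul _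

lemma integral_det_of_columns_pi (hF : ∀ i j, Integrable (fun v => F j v i) (μ j)) :
    ∫ x, (of fun i j => F j (x j) i).det ∂(Measure.pi μ)
      = (of fun i j => ∫ v, F j v i ∂μ j).det := by
  simp_rw [det_apply', of_apply]
  rw [integral_finsetSum _ fun σ _ =>
    (Integrable.fintype_prod fun j => hF (σ j) j).const_mul _]
  refine sum_congr rfl fun σ _ => ?_
  rw [integral_const_mul, integral_fintype_prod_eq_prod (fun j v => F j v (σ j))]

end DetOfColumns

section SecondMoment

variable {ι κ : Type*} [Fintype ι] [Fintype κ] [DecidableEq κ]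

noncomputable def secondMoment (μ : Measure (EuclideanSpace ℝ ι)) : Matrix ι ι ℝ :=
  of fun a b => ∫ v, v a * v b ∂μ

lemma det_gram_eq_sum_det (u : κ → EuclideanSpace ℝ ι) :
    (gram ℝ u).det = ∑ f : κ → ι, (of fun i j => u j (f i) * u j (f j)).det := by
  have hrows : (gram ℝ u : κ → κ → ℝ) = fun i => ∑ a, u i a • fun j => u j a := by
    ext i j
    simp [PiLp.inner_apply, mul_comm]
  have hcols : ∀ f : κ → ι, (of fun i j => u j (f i) * u j (f j))
      = (of fun i j => u j (f i)) * diagonal fun j => u j (f j) := fun f => by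
    ext i j
    simp
  rw [det, hrows]
  refine ((detRowAlternating : (κ → ℝ) [⋀^κ]→ₗ[ℝ] ℝ).toMultilinearMap.map_sum _).trans
    (sum_congr rfl fun f _ => ?_)
  rw [hcols, det_mul, det_diagonal, mul_comm]
  exact (detRowAlternating : (κ → ℝ) [⋀^κ]→ₗ[ℝ] ℝ).map_smul_univ (fun i => u i (f i)) _

variable {μ : Measure (EuclideanSpace ℝ ι)}

lemma memLp_coord (hμ : MemLp id 2 μ) (a : ι) : MemLp (fun v : EuclideanSpace ℝ ι => v a) 2 μ :=
  (EuclideanSpace.proj (𝕜 := ℝ) a : EuclideanSpace ℝ ι →L[ℝ] ℝ).comp_memLp' hμ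

lemma integrable_coord_mul (hμ : MemLp id 2 μ) (a b : ι) :
    Integrable (fun v : EuclideanSpace ℝ ι => v a * v b) μ :=
  (memLp_coord hμ a).integrable_mul (memLp_coord hμ b)

lemma secondMoment_eq_gram (hμ : MemLp id 2 μ) :
    secondMoment μ = gram ℝ fun a => (memLp_coord hμ a).toLp := by
  ext a b
  rw [gram_apply, L2.inner_def]
  refine integral_congr_ae ?_
  filter_upwards [(memLp_coord hμ a).coeFn_toLp, (memLp_coord hμ b).coeFn_toLp] with v ha hb
  simp [ha, hb, mul_comm]

lemma posSemidef_secondMoment (hμ : MemLp id 2 μ) : (secondMoment μ).PosSemidef :=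
  secondMoment_eq_gram hμ ▸ posSemidef_gram ℝ _

lemma trace_secondMoment (hμ : MemLp id 2 μ) : (secondMoment μ).trace = ∫ v, ‖v‖ ^ 2 ∂μ := by
  simp only [trace, Matrix.diag_apply, secondMoment, of_apply]
  rw [← integral_finsetSum _ fun a _ => integrable_coord_mul hμ a a]
  congr with v
  rw [EuclideanSpace.real_norm_sq_eq]
  simp only [sq]

variable [SigmaFinite μ]

lemma integrable_det_gram (hμ : MemLp id 2 μ) :
    Integrable (fun u => (gram ℝ u).det) (Measure.pi fun _ : κ => μ) := by
  simp_rw [det_gram_eq_sum_det]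
  exact integrable_finsetSum _ fun f _ =>
    integrable_det_of_columns_pi fun i j => integrable_coord_mul hμ (f i) (f j)

lemma integral_det_gram (hμ : MemLp id 2 μ) :
    ∫ u, (gram ℝ u).det ∂(Measure.pi fun _ : κ => μ)
      = ∑ f : κ → ι, ((secondMoment μ).submatrix f f).det := by
  have hF (f : κ → ι) (i j : κ) := integrable_coord_mul hμ (f i) (f j)
  simp_rw [det_gram_eq_sum_det]
  rw [integral_finsetSum _ fun f _ => integrable_det_of_columns_pi (hF f)]
  exact sum_congr rfl fun f _ => integral_det_of_columns_pi (hF f)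

end SecondMoment

theorem measure_pairwise_orthogonal_le {κ E : Type*} [Fintype κ] [DecidableEq κ]
    [NormedAddCommGroup E] [InnerProductSpace ℝ E] [MeasurableSpace E] {ν : Measure (κ → E)}
    (hnorm : ∀ᵐ u ∂ν, ∀ i, ‖u i‖ = 1) (hint : Integrable (fun u => (gram ℝ u).det) ν) :
    ν {u | ∀ i j, i ≠ j → ⟪u i, u j⟫ = 0} ≤ ENNReal.ofReal (∫ u, (gram ℝ u).det ∂ν) := by
  have hnonneg : 0 ≤ᵐ[ν] fun u => (gram ℝ u).det :=
    ae_of_all _ fun u => (posSemidef_gram ℝ u).det_nonneg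
  rw [ofReal_integral_eq_lintegral_ofReal hint hnonneg]
  calc ν {u | ∀ i j, i ≠ j → ⟪u i, u j⟫ = 0}
      ≤ ν {u | 1 ≤ ENNReal.ofReal (gram ℝ u).det} := by
        refine measure_mono_ae (hnorm.mono fun u hu horth => ?_)
        have : gram ℝ u = 1 := gram_eq_one_iff_orthonormal.2 ⟨hu, fun i j hij => horth i j hij⟩
        change 1 ≤ ENNReal.ofReal (gram ℝ u).det
        simp [this]
    _ ≤ ∫⁻ u, ENNReal.ofReal (gram ℝ u).det ∂ν := by
        simpa using mul_meas_ge_le_lintegral₀ hint.aemeasurable.ennreal_ofReal 1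

lemma Nat.cast_descFactorial_le_factorial_div (n k : ℕ) :
    (n.descFactorial k : ℝ) ≤ n.factorial / (n - k).factorial := by
  rcases le_or_gt k n with hk | hk
  · rw [le_div_iff₀ (by positivity), mul_comm]
    exact_mod_cast (Nat.factorial_mul_descFactorial hk).le
  · rw [Nat.descFactorial_eq_zero_iff_lt.2 hk, Nat.cast_zero]
    positivity

theorem mutual_orth_prob_le_general (d ℓ : ℕ)
    (μ : Measure (EuclideanSpace ℝ (Fin d))) [IsProbabilityMeasure μ]
    (hμ : μ (Metric.sphere (0 : EuclideanSpace ℝ (Fin d)) 1) = 1) :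
    (Measure.pi fun _ : Fin ℓ => μ)
      {u : Fin ℓ → EuclideanSpace ℝ (Fin d) | ∀ i j, i ≠ j → ⟪u i, u j⟫ = 0}
      ≤ ENNReal.ofReal ((d.factorial : ℝ) / (((d - ℓ).factorial : ℝ) * (d : ℝ) ^ ℓ)) := by
  have hnorm : ∀ᵐ v ∂μ, ‖v‖ = 1 := by
    filter_upwards [(mem_ae_iff_prob_eq_one Metric.isClosed_sphere.measurableSet).2 hμ] with v hv
    simpa using hv
  have hL2 : MemLp id 2 μ := MemLp.of_bound aestronglyMeasurable_id 1 (hnorm.mono fun v hv => hv.le)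
  have htr : (secondMoment μ).trace = 1 := by
    rw [trace_secondMoment hL2,
      integral_congr_ae (g := fun _ => 1) (hnorm.mono fun v hv => by simp [hv])]
    simp
  calc _ ≤ ENNReal.ofReal (∫ u, (gram ℝ u).det ∂(Measure.pi fun _ : Fin ℓ => μ)) :=
        measure_pairwise_orthogonal_le
          (ae_all_iff.2 fun i => Measure.tendsto_eval_ae_ae (μ := fun _ => μ) (i := i)
            |>.eventually hnorm)
          (integrable_det_gram hL2)
    _ ≤ _ := by
        refine ENNReal.ofReal_le_ofReal ?_
        rw [integral_det_gram hL2, ← div_div]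
        refine (sum_det_submatrix_le (posSemidef_secondMoment hL2) htr).trans ?_
        simpa using div_le_div_of_nonneg_right (Nat.cast_descFactorial_le_factorial_div d ℓ)
          (by positivity : (0 : ℝ) ≤ d ^ ℓ)

theorem mutual_orth_prob_le (d ℓ : ℕ) (hℓ : 2 ≤ ℓ) (hd : ℓ ≤ d)
    (μ : Measure (EuclideanSpace ℝ (Fin d))) [IsProbabilityMeasure μ]
    (hμ : μ (Metric.sphere (0 : EuclideanSpace ℝ (Fin d)) 1) = 1) :
    (Measure.pi fun _ : Fin ℓ => μ)
      {u : Fin ℓ → EuclideanSpace ℝ (Fin d) | ∀ i j, i ≠ j → ⟪u i, u j⟫ = 0}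
      ≤ ENNReal.ofReal ((d.factorial : ℝ) / (((d - ℓ).factorial : ℝ) * (d : ℝ) ^ ℓ)) :=
  mutual_orth_prob_le_general d ℓ μ hμ
end

section
/- Define $f : (\mathbb{R}^3 \setminus \{0\})^2 \to$ subspaces of $\mathbb{R}^3$ by $f(u,v) = u^\perp \cap v^\perp$ if $\langle u,v \rangle = 0$, and $f(u,v) = u^\perp$ otherwise. Let $x, y, a, b \in (S^2)^n$ with $\{x,y\} \neq \{a,b\}$ and $x \neq y$, $a \neq b$, such that every three distinct elements among $\{x,y,a,b\}$ are vector trifferent. Then the subspaces $E_{x,y} = \bigotimes_{i=1}^n f(x_i, y_i)$ and $E_{a,b} = \bigotimes_{i=1}^n f(a_i, b_i)$ of $(\mathbb{R}^3)^{\otimes n}$ are orthogonal. -/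
/-!
Some coordinate `i` sees `x i ⊥ y i` together with a third unit vector `c`, orthogonal to both,
such that `f(a i, b i) ⊆ c^⊥`: take `c = a i` when `a ∉ {x, y}`; otherwise `a i ∈ {x i, y i}`, so
`a i ⊥ b i`, `f(a i, b i) ⊆ (b i)^⊥`, and `c = b i` works. As `x i, y i, c` is an orthogonal basis
of `ℝ³`, `f(x i, y i) = (x i)^⊥ ∩ (y i)^⊥ = ℝ c`, which is orthogonal to `c^⊥ ⊇ f(a i, b i)`.
Inner products of elementary tensors factor over the coordinates, so the `i`-th factor kills the
inner product of any two generators of `E_{x,y}` and `E_{a,b}`.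
-/

open scoped RealInnerProductSpace

/-- The subspace of `ℝ³` associated to a pair of nonzero vectors: `u^⊥ ∩ v^⊥` if `u ⊥ v`,
and `u^⊥` otherwise. -/
noncomputable def pairSubspace (u v : EuclideanSpace ℝ (Fin 3)) :
    Submodule ℝ (EuclideanSpace ℝ (Fin 3)) :=
  if ⟪u, v⟫ = 0 then (ℝ ∙ u)ᗮ ⊓ (ℝ ∙ v)ᗮ else (ℝ ∙ u)ᗮ

/-- The subspace `E_{x,y} = ⨂ᵢ f(xᵢ, yᵢ)` of `(ℝ³)^{⊗ n}`, where the tensor power is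
realized concretely as `EuclideanSpace ℝ (Fin n → Fin 3)` and elementary tensors are
`j ↦ ∏ i, vᵢ (j i)`. -/
noncomputable def pairTensorSubspace (n : ℕ) (x y : Fin n → EuclideanSpace ℝ (Fin 3)) :
    Submodule ℝ (EuclideanSpace ℝ (Fin n → Fin 3)) :=
  Submodule.span ℝ {w : EuclideanSpace ℝ (Fin n → Fin 3) |
    ∃ v : Fin n → EuclideanSpace ℝ (Fin 3),
      (∀ i, v i ∈ pairSubspace (x i) (y i)) ∧ w = WithLp.toLp 2 (fun j => ∏ i, v i (j i))}

open scoped InnerProductSpace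

section ThreeDim

variable {𝕜 E : Type*} [RCLike 𝕜] [NormedAddCommGroup E] [InnerProductSpace 𝕜 E]
  [FiniteDimensional 𝕜 E]

open Module Submodule

theorem orthogonal_inf_orthogonal_eq_span_singleton (hE : finrank 𝕜 E = 3) {e₁ e₂ e₃ : E}
    (h₁ : e₁ ≠ 0) (h₂ : e₂ ≠ 0) (h₃ : e₃ ≠ 0)
    (h₁₂ : ⟪e₁, e₂⟫_𝕜 = 0) (h₁₃ : ⟪e₁, e₃⟫_𝕜 = 0) (h₂₃ : ⟪e₂, e₃⟫_𝕜 = 0) :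
    (𝕜 ∙ e₁)ᗮ ⊓ (𝕜 ∙ e₂)ᗮ = 𝕜 ∙ e₃ := by
  have hle : 𝕜 ∙ e₃ ≤ (𝕜 ∙ e₁)ᗮ ⊓ (𝕜 ∙ e₂)ᗮ := by
    simp only [le_inf_iff, span_singleton_le_iff_mem, mem_orthogonal_singleton_iff_inner_right]
    exact ⟨h₁₃, h₂₃⟩
  have hsup : finrank 𝕜 ↥(𝕜 ∙ e₁ ⊔ 𝕜 ∙ e₂) = 2 := by
    have hdisj : Disjoint (𝕜 ∙ e₁) (𝕜 ∙ e₂) := (isOrtho_span.2 (by simpa using h₁₂)).disjoint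
    have := finrank_sup_add_finrank_inf_eq (𝕜 ∙ e₁) (𝕜 ∙ e₂)
    rw [hdisj.eq_bot, finrank_bot, finrank_span_singleton h₁, finrank_span_singleton h₂] at this
    omega
  refine (eq_of_le_of_finrank_eq hle ?_).symm
  rw [inf_orthogonal, finrank_span_singleton h₃]
  exact (finrank_add_finrank_orthogonal' (by rw [hsup, hE])).symm

theorem isOrtho_orthogonal_inf_orthogonal (hE : finrank 𝕜 E = 3) {e₁ e₂ e₃ : E}
    (h₁ : e₁ ≠ 0) (h₂ : e₂ ≠ 0) (h₃ : e₃ ≠ 0)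
    (h₁₂ : ⟪e₁, e₂⟫_𝕜 = 0) (h₁₃ : ⟪e₁, e₃⟫_𝕜 = 0) (h₂₃ : ⟪e₂, e₃⟫_𝕜 = 0) :
    (𝕜 ∙ e₁)ᗮ ⊓ (𝕜 ∙ e₂)ᗮ ⟂ (𝕜 ∙ e₃)ᗮ := by
  rw [orthogonal_inf_orthogonal_eq_span_singleton hE h₁ h₂ h₃ h₁₂ h₁₃ h₂₃]
  exact isOrtho_orthogonal_right _

end ThreeDim

theorem inner_toLp_prod {𝕜 ι κ : Type*} [RCLike 𝕜] [Fintype ι] [DecidableEq ι] [Fintype κ]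
    (v w : ι → EuclideanSpace 𝕜 κ) :
    ⟪(WithLp.toLp 2 (fun j : ι → κ => ∏ i, v i (j i)) : EuclideanSpace 𝕜 (ι → κ)),
      WithLp.toLp 2 (fun j : ι → κ => ∏ i, w i (j i))⟫_𝕜 = ∏ i, ⟪v i, w i⟫_𝕜 := by
  simp only [PiLp.inner_apply, RCLike.inner_apply, map_prod, ← Finset.prod_mul_distrib]
  exact (Fintype.prod_sum fun i k => w i k * (starRingEnd 𝕜) (v i k)).symm

section PairSubspace

open Submodule

theorem pairSubspace_le_orthogonal_left (u v : EuclideanSpace ℝ (Fin 3)) :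
    pairSubspace u v ≤ (ℝ ∙ u)ᗮ := by
  unfold pairSubspace
  split_ifs
  exacts [inf_le_left, le_rfl]

theorem pairSubspace_le_orthogonal_right {u v : EuclideanSpace ℝ (Fin 3)} (h : ⟪u, v⟫ = 0) :
    pairSubspace u v ≤ (ℝ ∙ v)ᗮ := by
  rw [pairSubspace, if_pos h]
  exact inf_le_right

theorem pairSubspace_isOrtho_orthogonal {u v c : EuclideanSpace ℝ (Fin 3)}
    (hu : u ≠ 0) (hv : v ≠ 0) (hc : c ≠ 0)
    (huv : ⟪u, v⟫ = 0) (huc : ⟪u, c⟫ = 0) (hvc : ⟪v, c⟫ = 0) :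
    pairSubspace u v ⟂ (ℝ ∙ c)ᗮ := by
  rw [pairSubspace, if_pos huv]
  exact isOrtho_orthogonal_inf_orthogonal finrank_euclideanSpace_fin hu hv hc huv huc hvc

theorem pairTensorSubspace_isOrtho {n : ℕ} {x y a b : Fin n → EuclideanSpace ℝ (Fin 3)}
    (i : Fin n) (h : pairSubspace (x i) (y i) ⟂ pairSubspace (a i) (b i)) :
    pairTensorSubspace n x y ⟂ pairTensorSubspace n a b := by
  refine isOrtho_span.2 ?_
  rintro _ ⟨v, hv, rfl⟩ _ ⟨w, hw, rfl⟩
  rw [inner_toLp_prod]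
  exact Finset.prod_eq_zero (Finset.mem_univ i) (h.inner_eq (hv i) (hw i))

end PairSubspace

theorem pair_subspaces_orthogonal (n : ℕ) (x y a b : Fin n → EuclideanSpace ℝ (Fin 3))
    (hx : ∀ i, ‖x i‖ = 1) (hy : ∀ i, ‖y i‖ = 1) (ha : ∀ i, ‖a i‖ = 1) (hb : ∀ i, ‖b i‖ = 1)
    (hxy : x ≠ y) (hab : a ≠ b)
    (hpairs : ¬((a = x ∧ b = y) ∨ (a = y ∧ b = x)))
    (htriff : ∀ p q r : Fin n → EuclideanSpace ℝ (Fin 3),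
      p ∈ ({x, y, a, b} : Set (Fin n → EuclideanSpace ℝ (Fin 3))) →
      q ∈ ({x, y, a, b} : Set (Fin n → EuclideanSpace ℝ (Fin 3))) →
      r ∈ ({x, y, a, b} : Set (Fin n → EuclideanSpace ℝ (Fin 3))) →
      p ≠ q → p ≠ r → q ≠ r →
      ∃ i, ⟪p i, q i⟫ = 0 ∧ ⟪p i, r i⟫ = 0 ∧ ⟪q i, r i⟫ = 0) :
    ∀ u ∈ pairTensorSubspace n x y, ∀ w ∈ pairTensorSubspace n a b, ⟪u, w⟫ = 0 := by
  have hne : ∀ {v : EuclideanSpace ℝ (Fin 3)}, ‖v‖ = 1 → v ≠ 0 :=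
    fun h => norm_ne_zero_iff.1 (by simp [h])
  suffices ∃ i, pairSubspace (x i) (y i) ⟂ pairSubspace (a i) (b i) by
    obtain ⟨i, hi⟩ := this
    exact Submodule.isOrtho_iff_inner_eq.1 (pairTensorSubspace_isOrtho i hi)
  by_cases ha_new : a ≠ x ∧ a ≠ y
  · obtain ⟨i, hxy_i, hxa, hya⟩ :=
      htriff x y a (by simp) (by simp) (by simp) hxy ha_new.1.symm ha_new.2.symm
    refine ⟨i, .mono_right (pairSubspace_le_orthogonal_left _ _) ?_⟩
    exact pairSubspace_isOrtho_orthogonal (hne (hx i)) (hne (hy i)) (hne (ha i)) hxy_i hxa hya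
  · have hb_new : b ≠ x ∧ b ≠ y := by
      constructor <;> rintro rfl <;> tauto
    obtain ⟨i, hxy_i, hxb, hyb⟩ :=
      htriff x y b (by simp) (by simp) (by simp) hxy hb_new.1.symm hb_new.2.symm
    have hab_i : ⟪a i, b i⟫ = 0 := by
      obtain rfl | rfl : a = x ∨ a = y := by tauto
      exacts [hxb, hyb]
    refine ⟨i, .mono_right (pairSubspace_le_orthogonal_right hab_i) ?_⟩
    exact pairSubspace_isOrtho_orthogonal (hne (hx i)) (hne (hy i)) (hne (hb i)) hxy_i hxb hyb
end

section
/- Every trifferent code $\mathcal{C} \subseteq \{0,1,2\}^n$ satisfies $|\mathcal{C}| \le 2 \cdot (3/2)^n$. -/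
def Trifferent (n : ℕ) (C : Finset (Fin n → Fin 3)) : Prop :=
  ∀ x ∈ C, ∀ y ∈ C, ∀ z ∈ C, x ≠ y → x ≠ z → y ≠ z →
    ∃ i, x i ≠ y i ∧ x i ≠ z i ∧ y i ≠ z i

lemma fin3_pigeonhole : ∀ v a b c : Fin 3, a ≠ v → b ≠ v → c ≠ v →
    a ≠ b → a ≠ c → b ≠ c → False := by decide

/-- Elias's bound: every trifferent code has size at most `2 (3/2)^n`. -/
theorem elias_bound (n : ℕ) (C : Finset (Fin n → Fin 3)) (hC : Trifferent n C) :
    (C.card : ℝ) ≤ 2 * (3 / 2) ^ n := by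
  induction n with
  | zero =>
    have h1 : C.card ≤ Fintype.card (Fin 0 → Fin 3) := Finset.card_le_univ C
    have h2 : Fintype.card (Fin 0 → Fin 3) = 1 := by simp
    rw [h2] at h1
    have : (C.card : ℝ) ≤ 1 := by exact_mod_cast h1
    norm_num
    linarith
  | succ m ih =>
    classical
    set a : Fin 3 → ℕ := fun v => (C.filter (fun x => x 0 = v)).card with ha
    have hsum : a 0 + a 1 + a 2 = C.card := by
      have h := Finset.card_eq_sum_card_fiberwise
        (f := fun x : Fin (m+1) → Fin 3 => x 0) (s := C) (t := Finset.univ)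
        (fun x _ => Finset.mem_univ _)
      rw [h, Fin.sum_univ_three]
    obtain ⟨v, hv⟩ : ∃ v : Fin 3, 3 * a v ≤ C.card := by
      by_contra h
      push_neg at h
      have h0 := h 0; have h1 := h 1; have h2 := h 2
      omega
    set C' := C.filter (fun x => ¬ (x 0 = v)) with hC'def
    have hcard' : a v + C'.card = C.card := by
      rw [hC'def, ha]
      exact Finset.card_filter_add_card_filter_not (p := fun x : Fin (m+1) → Fin 3 => x 0 = v)
    have hsubC : ∀ x ∈ C', x ∈ C ∧ x 0 ≠ v := by
      intro x hx
      rw [hC'def, Finset.mem_filter] at hx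
      exact hx
    -- key bound on C'
    have hkey : (C'.card : ℝ) ≤ 2 * (3 / 2) ^ m := by
      rcases le_or_gt C'.card 2 with hle | hgt
      · have : (C'.card : ℝ) ≤ 2 := by exact_mod_cast hle
        have hp : (1 : ℝ) ≤ (3 / 2) ^ m := one_le_pow₀ (by norm_num)
        nlinarith
      · -- card C' ≥ 3 : project away coordinate 0
        set p : (Fin (m+1) → Fin 3) → (Fin m → Fin 3) := fun x => x ∘ Fin.succ with hp
        have hinj : Set.InjOn p C' := by
          intro x hx y hy hpxy
          by_contra hxy
          have hx' := hsubC x hx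
          have hy' := hsubC y hy
          -- find a third element
          have h1 : 1 ≤ ((C'.erase x).erase y).card := by
            have e1 : (C'.erase x).card = C'.card - 1 := Finset.card_erase_of_mem hx
            have hy2 : y ∈ C'.erase x := Finset.mem_erase.mpr ⟨fun h => hxy h.symm, hy⟩
            have e2 : ((C'.erase x).erase y).card = (C'.erase x).card - 1 :=
              Finset.card_erase_of_mem hy2
            omega
          obtain ⟨z, hz⟩ := Finset.card_pos.mp h1
          have hzx : z ≠ x := by
            have := (Finset.mem_erase.mp ((Finset.mem_erase.mp hz).2)).1
            exact this
          have hzy : z ≠ y := (Finset.mem_erase.mp hz).1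
          have hzC' : z ∈ C' := (Finset.mem_erase.mp ((Finset.mem_erase.mp hz).2)).2
          have hz' := hsubC z hzC'
          obtain ⟨i, h1', h2', h3'⟩ := hC x hx'.1 y hy'.1 z hz'.1 hxy
            (fun h => hzx h.symm) (fun h => hzy h.symm)
          rcases Fin.eq_zero_or_eq_succ i with rfl | ⟨j, rfl⟩
          · exact fin3_pigeonhole v (x 0) (y 0) (z 0) hx'.2 hy'.2 hz'.2 h1' h2' h3'
          · exact h1' (congrFun hpxy j)
        have hD : Trifferent m (C'.image p) := by
          intro px hpx py hpy pz hpz hxy hxz hyz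
          obtain ⟨x, hx, rfl⟩ := Finset.mem_image.mp hpx
          obtain ⟨y, hy, rfl⟩ := Finset.mem_image.mp hpy
          obtain ⟨z, hz, rfl⟩ := Finset.mem_image.mp hpz
          have hx' := hsubC x hx
          have hy' := hsubC y hy
          have hz' := hsubC z hz
          obtain ⟨i, h1', h2', h3'⟩ := hC x hx'.1 y hy'.1 z hz'.1
            (fun h => hxy (by rw [h])) (fun h => hxz (by rw [h]))
            (fun h => hyz (by rw [h]))
          rcases Fin.eq_zero_or_eq_succ i with rfl | ⟨j, rfl⟩
          · exact (fin3_pigeonhole v (x 0) (y 0) (z 0) hx'.2 hy'.2 hz'.2 h1' h2' h3').elim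
          · exact ⟨j, h1', h2', h3'⟩
        have hcard : (C'.image p).card = C'.card := Finset.card_image_of_injOn hinj
        have := ih (C'.image p) hD
        rw [hcard] at this
        exact this
    -- combine
    have hR : 2 * (C.card : ℝ) ≤ 3 * C'.card := by
      have : 2 * C.card ≤ 3 * C'.card := by omega
      exact_mod_cast this
    have : ((3:ℝ)/2)^(m+1) = (3/2) * (3/2)^m := by ring
    nlinarith [hkey]
end
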